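/- On the Hochschild bicomplex C^{p,q} = C^p(A_n, Ω̂^q), the exterior differential d f := (−1)^p dz^i ∧ ∂f/∂z^i anticommutes with the Hochschild differential ∂: one has d∂ + ∂d = 0. -/

import Mathlib

open MvPolynomial

/-! The Hochschild bicomplex `C^{p,q} = C^p(A_n, Ω̂^q)`: cochains on the
polynomial Weyl algebra `A_n = ℂ[y^1,…,y^{2n}]` with values in exterior forms
in `dz^1,…,dz^{2n}` whose coefficients are formal power series in the `y` and
`z` variables, with the star product
`a ∗ b = a · exp(i ∂_y^← π (∂_y^→ + ∂_z^→)) · b`, the right action being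
twisted by `ã(y,z;dz) = a(-y)` (for `z`-independent `0`-forms `a ∈ A_n`). -/

variable (N : ℕ)

/-- Variables: `y`'s are `Sum.inl`, `z`'s are `Sum.inr`. -/
abbrev YZ (N : ℕ) := Fin N ⊕ Fin N

/-- Coefficients of forms: power series in `y` and `z`. -/
abbrev OSeries (N : ℕ) := MvPowerSeries (YZ N) ℂ

/-- Coefficient array of a `q`-form in the `dz`'s. -/
abbrev OForm (N q : ℕ) := (Fin q → Fin N) → OSeries N

/-- A Hochschild `p`-cochain with values in `q`-forms. -/
abbrev BiCochain (N p q : ℕ) := (Fin p → MvPolynomial (Fin N) ℂ) → OForm N q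

/-- Partial derivative on power series in the doubled `(y,z)` variables. -/
noncomputable def pdW (v : YZ N ⊕ YZ N)
    (g : MvPowerSeries (YZ N ⊕ YZ N) ℂ) : MvPowerSeries (YZ N ⊕ YZ N) ℂ :=
  fun e => ((e v : ℂ) + 1) * g (e + Finsupp.single v 1)

/-- The contraction operator `Σ π^{jk} ∂_{y^j} ⊗ (∂_{y^k} + ∂_{z^k})` on power
series in doubled `(y,z)` variables: the left tensor factor lives in the
`Sum.inl` copy, the right one in the `Sum.inr` copy. -/
noncomputable def stepW (π : Matrix (Fin N) (Fin N) ℂ)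
    (g : MvPowerSeries (YZ N ⊕ YZ N) ℂ) : MvPowerSeries (YZ N ⊕ YZ N) ℂ :=
  fun e => ∑ j : Fin N, ∑ k : Fin N, π j k *
    (pdW N (Sum.inl (Sum.inl j)) (pdW N (Sum.inr (Sum.inl k)) g) e +
     pdW N (Sum.inl (Sum.inl j)) (pdW N (Sum.inr (Sum.inr k)) g) e)

open scoped Classical in
/-- Place a power series in `(y,z)` in the left copy of the doubled variables. -/
noncomputable def embWL (f : OSeries N) : MvPowerSeries (YZ N ⊕ YZ N) ℂ :=
  fun e => if ∀ v, e (Sum.inr v) = 0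
    then f (Finsupp.comapDomain Sum.inl e Sum.inl_injective.injOn) else 0

open scoped Classical in
/-- Place a power series in `(y,z)` in the right copy of the doubled variables. -/
noncomputable def embWR (f : OSeries N) : MvPowerSeries (YZ N ⊕ YZ N) ℂ :=
  fun e => if ∀ v, e (Sum.inl v) = 0
    then f (Finsupp.comapDomain Sum.inr e Sum.inr_injective.injOn) else 0

/-- Identify the two copies of the variables (multiplication map). -/
noncomputable def collapseW (g : MvPowerSeries (YZ N ⊕ YZ N) ℂ) : OSeries N :=
  fun e => ∑ p ∈ Finset.HasAntidiagonal.antidiagonal e,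
    g (Finsupp.mapDomain Sum.inl p.1 + Finsupp.mapDomain Sum.inr p.2)

/-- Left star action `a ∗ f` of a polynomial `a(y) ∈ A_n` on a power series in
`(y,z)`; the exponential series truncates at `totalDegree a`. -/
noncomputable def leftStarW (π : Matrix (Fin N) (Fin N) ℂ)
    (a : MvPolynomial (Fin N) ℂ) (f : OSeries N) : OSeries N :=
  ∑ m ∈ Finset.range (a.totalDegree + 1),
    ((Complex.I ^ m) / (m.factorial : ℂ)) •
      collapseW N ((stepW N π)^[m]
        (((rename (Sum.inl ∘ Sum.inl) a : MvPolynomial (YZ N ⊕ YZ N) ℂ) :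
            MvPowerSeries (YZ N ⊕ YZ N) ℂ) * embWR N f))

/-- Right star action `f ∗ a` of a polynomial `a(y) ∈ A_n` on a power series in
`(y,z)`. -/
noncomputable def rightStarW (π : Matrix (Fin N) (Fin N) ℂ)
    (f : OSeries N) (a : MvPolynomial (Fin N) ℂ) : OSeries N :=
  ∑ m ∈ Finset.range (a.totalDegree + 1),
    ((Complex.I ^ m) / (m.factorial : ℂ)) •
      collapseW N ((stepW N π)^[m]
        (embWL N f * ((rename (Sum.inr ∘ Sum.inl) a : MvPolynomial (YZ N ⊕ YZ N) ℂ) :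
            MvPowerSeries (YZ N ⊕ YZ N) ℂ)))

/-- The Moyal star product on the polynomial Weyl algebra `A_N` (used for the
products `a_k ∗ a_{k+1}` inside the Hochschild differential). -/
noncomputable def moyalP (π : Matrix (Fin N) (Fin N) ℂ)
    (a b : MvPolynomial (Fin N) ℂ) : MvPolynomial (Fin N) ℂ :=
  ∑ m ∈ Finset.range (a.totalDegree + 1),
    ((Complex.I ^ m) / (m.factorial : ℂ)) •
      (rename (Sum.elim id id))
        (((∑ j : Fin N, ∑ k : Fin N, π j k •
            ((pderiv (Sum.inl j)).toLinearMap ∘ₗ (pderiv (Sum.inr k)).toLinearMap) :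
          Module.End ℂ (MvPolynomial (Fin N ⊕ Fin N) ℂ)) ^ m)
          (rename Sum.inl a * rename Sum.inr b))

/-- The parity automorphism `a(y) ↦ a(-y)`. -/
noncomputable def parityMap :
    MvPolynomial (Fin N) ℂ →ₐ[ℂ] MvPolynomial (Fin N) ℂ :=
  aeval fun j => -(X j)

/-- The Hochschild differential `∂ : C^{p,q} → C^{p+1,q}` (with the right
action twisted by the parity automorphism). -/
noncomputable def hochDW (π : Matrix (Fin N) (Fin N) ℂ) {p q : ℕ}
    (f : BiCochain N p q) : BiCochain N (p + 1) q :=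
  fun a i =>
    leftStarW N π (a 0) (f (fun r => a r.succ) i) +
    ∑ j : Fin p, ((-1 : ℤ) ^ (j : ℕ)) •
      f (fun r : Fin p =>
        if (r : ℕ) < (j : ℕ) then a r.castSucc
        else if (r : ℕ) = (j : ℕ) then moyalP N π (a r.castSucc) (a r.succ)
        else a r.succ) i +
    ((-1 : ℤ) ^ (p + 1)) •
      rightStarW N π (f (fun r => a r.castSucc) i) (parityMap N (a (Fin.last p)))

/-- The exterior differential `d : C^{p,q} → C^{p,q+1}`,
`df = (-1)^p dz^i ∧ ∂f/∂z^i`. -/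
noncomputable def extDW {p q : ℕ} (f : BiCochain N p q) : BiCochain N p (q + 1) :=
  fun a i => ((-1 : ℤ) ^ p) • ∑ k : Fin (q + 1), ((-1 : ℤ) ^ (k : ℕ)) •
    (fun e => ((e (Sum.inr (i k)) : ℂ) + 1) *
      f a (fun r => i (k.succAbove r)) (e + Finsupp.single (Sum.inr (i k)) 1)
      : OSeries N)

/-! The `z`-derivatives are derivations of the star product that vanish on the `z`-independent
elements of `A_n`, and the bidifferential operator of the star product has constant coefficients.
Hence `dz^k ∧ ∂/∂z^k : Ω̂^q → Ω̂^{q+1}` is a morphism of `A_n`-bimodules, and the Hochschild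
differential, being natural in morphisms of the coefficient bimodule, commutes with it. Since
`d = (-1)^p dz^k ∧ ∂/∂z^k` on `C^{p,q}`, the two composites `d∂` and `∂d` differ by the sign
`(-1)^{p+1} / (-1)^p = -1`. -/

namespace MvPowerSeries

variable {σ R : Type*} [CommSemiring R]

theorem pderiv_eq_mul_shift (v : σ) (g : MvPowerSeries σ R) :
    pderiv R v g = fun e => ((e v : R) + 1) * g (e + Finsupp.single v 1) := by
  funext e
  exact (coeff_pderiv g e).trans (mul_comm _ _)

theorem pderiv_comm [DecidableEq σ] (u w : σ) (g : MvPowerSeries σ R) :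
    pderiv R u (pderiv R w g) = pderiv R w (pderiv R u g) := by
  ext e
  simp only [coeff_pderiv, add_right_comm e (Finsupp.single u 1), Finsupp.add_apply,
    Finsupp.single_apply]
  rcases eq_or_ne u w with rfl | h
  · rfl
  · simp only [if_neg h, if_neg h.symm, add_zero]
    ring

theorem pderiv_coe_rename_eq_zero {τ : Type*} (ρ : σ → τ) (a : MvPolynomial σ R) {u : τ}
    (hu : u ∉ Set.range ρ) : pderiv R u (MvPolynomial.rename ρ a : MvPowerSeries τ R) = 0 := by
  classical
  rw [pderiv_coe, MvPolynomial.pderiv_eq_zero_of_notMem_vars, MvPolynomial.coe_zero]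
  intro hvar
  obtain ⟨s, -, rfl⟩ := Finset.mem_image.mp (MvPolynomial.vars_rename ρ a hvar)
  exact hu ⟨s, rfl⟩

end MvPowerSeries

namespace Finsupp

open Finset

variable {σ R : Type*} [DecidableEq σ] [CommSemiring R]

theorem sum_antidiagonal_add_single_mul_fst (v : σ) (e : σ →₀ ℕ)
    (G : (σ →₀ ℕ) × (σ →₀ ℕ) → R) :
    ∑ x ∈ antidiagonal (e + single v 1), G x * x.1 v
      = ∑ x ∈ antidiagonal e, G (x.1 + single v 1, x.2) * (x.1 v + 1) := by
  let shift := (addRightEmbedding (single v 1)).prodMap (Function.Embedding.refl (σ →₀ ℕ))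
  have hsub : (antidiagonal e).map shift ⊆ antidiagonal (e + single v 1) := by
    intro x hx
    obtain ⟨y, hy, rfl⟩ := mem_map.mp hx
    rw [HasAntidiagonal.mem_antidiagonal] at hy ⊢
    simp [shift, ← hy, add_right_comm]
  rw [← sum_subset hsub, sum_map]
  · refine Finset.sum_congr rfl fun ⟨a, b⟩ _ => ?_
    simp [shift]
  · intro x hx hxs
    suffices x.1 v = 0 by simp [this]
    by_contra hne
    have hle : single v 1 ≤ x.1 := single_le_iff.mpr (Nat.one_le_iff_ne_zero.mpr hne)
    refine hxs (mem_map.mpr ⟨(x.1 - single v 1, x.2), ?_, ?_⟩)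
    · rw [HasAntidiagonal.mem_antidiagonal] at hx ⊢
      rw [← add_right_cancel_iff (a := single v 1), add_right_comm, tsub_add_cancel_of_le hle, hx]
    · simp [shift, tsub_add_cancel_of_le hle]

theorem mul_sum_antidiagonal_add_single (v : σ) (e : σ →₀ ℕ)
    (F : (σ →₀ ℕ) × (σ →₀ ℕ) → R) :
    ((e v : R) + 1) * ∑ x ∈ antidiagonal (e + single v 1), F x
      = ∑ x ∈ antidiagonal e, (F (x.1 + single v 1, x.2) * (x.1 v + 1)
          + F (x.1, x.2 + single v 1) * (x.2 v + 1)) := by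
  have hsnd := sum_antidiagonal_add_single_mul_fst v e (fun x => F (x.2, x.1))
  rw [sum_antidiagonal_swap (e + single v 1) (fun a b => F (b, a) * a v),
    sum_antidiagonal_swap e (fun a b => F (b, a + single v 1) * (a v + 1))] at hsnd
  simp only [Prod.mk.eta] at hsnd
  rw [sum_add_distrib, ← sum_antidiagonal_add_single_mul_fst, ← hsnd, ← sum_add_distrib,
    Finset.mul_sum]
  refine Finset.sum_congr rfl fun x hx => ?_
  have hv : x.1 v + x.2 v = e v + 1 := by
    simpa using DFunLike.congr_fun (HasAntidiagonal.mem_antidiagonal.mp hx) v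
  rw [← mul_add, mul_comm, ← Nat.cast_add, hv, Nat.cast_add, Nat.cast_one]

end Finsupp

section Bicomplex

variable {N : ℕ}

theorem pdW_eq_pderiv (v : YZ N ⊕ YZ N) : pdW N v = MvPowerSeries.pderiv ℂ v := by
  funext g
  exact (MvPowerSeries.pderiv_eq_mul_shift v g).symm

noncomputable def stepEnd (π : Matrix (Fin N) (Fin N) ℂ) :
    Module.End ℂ (MvPowerSeries (YZ N ⊕ YZ N) ℂ) :=
  ∑ j, ∑ k, π j k • ((MvPowerSeries.pderiv ℂ (Sum.inl (Sum.inl j))).toLinearMap ∘ₗ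
    ((MvPowerSeries.pderiv ℂ (Sum.inr (Sum.inl k))).toLinearMap
      + (MvPowerSeries.pderiv ℂ (Sum.inr (Sum.inr k))).toLinearMap))

theorem stepW_eq (π : Matrix (Fin N) (Fin N) ℂ) : stepW N π = stepEnd π := by
  funext g
  ext e
  simp only [stepEnd, LinearMap.sum_apply, LinearMap.smul_apply, LinearMap.coe_comp,
    Derivation.coeFn_coe, Function.comp_apply, LinearMap.add_apply, map_add, smul_add, map_sum,
    map_smul, smul_eq_mul]
  simp only [MvPowerSeries.coeff_apply, stepW, pdW_eq_pderiv, mul_add]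

theorem stepEnd_commute_pderiv (π : Matrix (Fin N) (Fin N) ℂ) (u : YZ N ⊕ YZ N) :
    Commute (stepEnd π) (MvPowerSeries.pderiv ℂ u).toLinearMap := by
  refine LinearMap.ext fun g => ?_
  simp only [stepEnd, Module.End.mul_apply, Derivation.coeFn_coe, LinearMap.sum_apply,
    LinearMap.smul_apply, LinearMap.coe_comp, Function.comp_apply, LinearMap.add_apply, map_add,
    map_sum, Derivation.map_smul, MvPowerSeries.pderiv_comm u]

theorem stepW_iterate_eq (π : Matrix (Fin N) (Fin N) ℂ) (m : ℕ) :
    (stepW N π)^[m] = ⇑(stepEnd π ^ m) := by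
  rw [stepW_eq, Module.End.coe_pow]

theorem stepEnd_pow_pderiv (π : Matrix (Fin N) (Fin N) ℂ) (m : ℕ) (u : YZ N ⊕ YZ N)
    (g : MvPowerSeries (YZ N ⊕ YZ N) ℂ) :
    (stepEnd π ^ m) (MvPowerSeries.pderiv ℂ u g)
      = MvPowerSeries.pderiv ℂ u ((stepEnd π ^ m) g) :=
  LinearMap.congr_fun (((stepEnd_commute_pderiv π u).pow_left m).eq) g

theorem collapseW_add (g h : MvPowerSeries (YZ N ⊕ YZ N) ℂ) :
    collapseW N (g + h) = collapseW N g + collapseW N h := by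
  funext e
  exact Finset.sum_add_distrib

theorem pderiv_collapseW (w : YZ N) (g : MvPowerSeries (YZ N ⊕ YZ N) ℂ) :
    MvPowerSeries.pderiv ℂ w (collapseW N g)
      = collapseW N (MvPowerSeries.pderiv ℂ (Sum.inl w) g
          + MvPowerSeries.pderiv ℂ (Sum.inr w) g) := by
  funext e
  rw [MvPowerSeries.pderiv_eq_mul_shift]
  simp only [collapseW, Finsupp.mul_sum_antidiagonal_add_single, ← Finsupp.sumElim_eq_add]
  refine Finset.sum_congr rfl fun ⟨a, b⟩ _ => ?_
  change _ = MvPowerSeries.pderiv ℂ (Sum.inl w) g (a.sumElim b)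
    + MvPowerSeries.pderiv ℂ (Sum.inr w) g (a.sumElim b)
  simp only [MvPowerSeries.pderiv_eq_mul_shift, ← Finsupp.sumElim_single_zero,
    ← Finsupp.sumElim_zero_single, ← Finsupp.sumElim_add, add_zero, Finsupp.sumElim_inl,
    Finsupp.sumElim_inr]
  ring

theorem embWR_add (f g : OSeries N) : embWR N (f + g) = embWR N f + embWR N g := by
  ext e
  simp only [map_add, MvPowerSeries.coeff_apply, embWR]
  split_ifs
  exacts [rfl, (add_zero 0).symm]

theorem embWL_add (f g : OSeries N) : embWL N (f + g) = embWL N f + embWL N g := by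
  ext e
  simp only [map_add, MvPowerSeries.coeff_apply, embWL]
  split_ifs
  exacts [rfl, (add_zero 0).symm]

theorem pderiv_inr_embWR (w : YZ N) (f : OSeries N) :
    MvPowerSeries.pderiv ℂ (Sum.inr w) (embWR N f) = embWR N (MvPowerSeries.pderiv ℂ w f) := by
  funext e
  have hcond : (∀ v, (e + Finsupp.single (Sum.inr w) 1 : YZ N ⊕ YZ N →₀ ℕ) (Sum.inl v) = 0)
      ↔ ∀ v, e (Sum.inl v) = 0 := by
    simp
  simp only [MvPowerSeries.pderiv_eq_mul_shift, embWR, hcond]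
  split_ifs
  · rw [Finsupp.comapDomain_add_of_injective Sum.inr_injective, Finsupp.comapDomain_single]
    simp
  · simp

theorem pderiv_inl_embWR (w : YZ N) (f : OSeries N) :
    MvPowerSeries.pderiv ℂ (Sum.inl w) (embWR N f) = 0 := by
  funext e
  rw [MvPowerSeries.pderiv_eq_mul_shift]
  refine mul_eq_zero_of_right _ (if_neg fun h => ?_)
  simpa using h w

theorem pderiv_inl_embWL (w : YZ N) (f : OSeries N) :
    MvPowerSeries.pderiv ℂ (Sum.inl w) (embWL N f) = embWL N (MvPowerSeries.pderiv ℂ w f) := by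
  funext e
  have hcond : (∀ v, (e + Finsupp.single (Sum.inl w) 1 : YZ N ⊕ YZ N →₀ ℕ) (Sum.inr v) = 0)
      ↔ ∀ v, e (Sum.inr v) = 0 := by
    simp
  simp only [MvPowerSeries.pderiv_eq_mul_shift, embWL, hcond]
  split_ifs
  · rw [Finsupp.comapDomain_add_of_injective Sum.inl_injective, Finsupp.comapDomain_single]
    simp
  · simp

theorem pderiv_inr_embWL (w : YZ N) (f : OSeries N) :
    MvPowerSeries.pderiv ℂ (Sum.inr w) (embWL N f) = 0 := by
  funext e
  rw [MvPowerSeries.pderiv_eq_mul_shift]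
  refine mul_eq_zero_of_right _ (if_neg fun h => ?_)
  simpa using h w

variable (π : Matrix (Fin N) (Fin N) ℂ)

theorem leftStarW_add (a : MvPolynomial (Fin N) ℂ) (f g : OSeries N) :
    leftStarW N π a (f + g) = leftStarW N π a f + leftStarW N π a g := by
  simp only [leftStarW, embWR_add, mul_add, stepW_iterate_eq, map_add, collapseW_add, smul_add,
    Finset.sum_add_distrib]

theorem rightStarW_add (a : MvPolynomial (Fin N) ℂ) (f g : OSeries N) :
    rightStarW N π (f + g) a = rightStarW N π f a + rightStarW N π g a := by
  simp only [rightStarW, embWL_add, add_mul, stepW_iterate_eq, map_add, collapseW_add, smul_add,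
    Finset.sum_add_distrib]

theorem leftStarW_zsmul (a : MvPolynomial (Fin N) ℂ) (c : ℤ) (f : OSeries N) :
    leftStarW N π a (c • f) = c • leftStarW N π a f :=
  map_zsmul (AddMonoidHom.mk' (leftStarW N π a) (leftStarW_add π a)) c f

theorem leftStarW_sum {ι : Type*} (a : MvPolynomial (Fin N) ℂ) (s : Finset ι)
    (F : ι → OSeries N) : leftStarW N π a (∑ x ∈ s, F x) = ∑ x ∈ s, leftStarW N π a (F x) :=
  map_sum (AddMonoidHom.mk' (leftStarW N π a) (leftStarW_add π a)) F s

theorem rightStarW_zsmul (a : MvPolynomial (Fin N) ℂ) (c : ℤ) (f : OSeries N) :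
    rightStarW N π (c • f) a = c • rightStarW N π f a :=
  map_zsmul (AddMonoidHom.mk' (rightStarW N π · a) (rightStarW_add π a)) c f

theorem rightStarW_sum {ι : Type*} (a : MvPolynomial (Fin N) ℂ) (s : Finset ι)
    (F : ι → OSeries N) : rightStarW N π (∑ x ∈ s, F x) a = ∑ x ∈ s, rightStarW N π (F x) a :=
  map_sum (AddMonoidHom.mk' (rightStarW N π · a) (rightStarW_add π a)) F s

theorem pderiv_leftStarW (a : MvPolynomial (Fin N) ℂ) (v : Fin N) (f : OSeries N) :
    MvPowerSeries.pderiv ℂ (Sum.inr v) (leftStarW N π a f)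
      = leftStarW N π a (MvPowerSeries.pderiv ℂ (Sum.inr v) f) := by
  have hPy := MvPowerSeries.pderiv_coe_rename_eq_zero (Sum.inl ∘ Sum.inl) a
    (u := (Sum.inl (Sum.inr v) : YZ N ⊕ YZ N)) (by simp)
  have hPz := MvPowerSeries.pderiv_coe_rename_eq_zero (Sum.inl ∘ Sum.inl) a
    (u := (Sum.inr (Sum.inr v) : YZ N ⊕ YZ N)) (by simp)
  simp only [leftStarW, map_sum, stepW_iterate_eq, pderiv_collapseW, ← stepEnd_pow_pderiv,
    Derivation.leibniz, pderiv_inr_embWR, pderiv_inl_embWR, Derivation.map_smul, hPy, hPz,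
    smul_eq_mul, mul_zero, add_zero, map_zero, zero_add]

theorem pderiv_rightStarW (a : MvPolynomial (Fin N) ℂ) (v : Fin N) (f : OSeries N) :
    MvPowerSeries.pderiv ℂ (Sum.inr v) (rightStarW N π f a)
      = rightStarW N π (MvPowerSeries.pderiv ℂ (Sum.inr v) f) a := by
  have hPy := MvPowerSeries.pderiv_coe_rename_eq_zero (Sum.inr ∘ Sum.inl) a
    (u := (Sum.inl (Sum.inr v) : YZ N ⊕ YZ N)) (by simp)
  have hPz := MvPowerSeries.pderiv_coe_rename_eq_zero (Sum.inr ∘ Sum.inl) a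
    (u := (Sum.inr (Sum.inr v) : YZ N ⊕ YZ N)) (by simp)
  simp only [rightStarW, mul_comm (embWL N _), map_sum, stepW_iterate_eq, pderiv_collapseW,
    ← stepEnd_pow_pderiv, Derivation.leibniz, pderiv_inl_embWL, pderiv_inr_embWL,
    Derivation.map_smul, hPy, hPz, smul_eq_mul, mul_zero, zero_mul, add_zero, map_zero]

theorem hochDW_comp_bimoduleHom {p q q' : ℕ} (T : OForm N q →+ OForm N q')
    (hL : ∀ a ω, T (fun i => leftStarW N π a (ω i)) = fun i => leftStarW N π a (T ω i))
    (hR : ∀ a ω, T (fun i => rightStarW N π (ω i) a) = fun i => rightStarW N π (T ω i) a)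
    (f : BiCochain N p q) :
    hochDW N π (fun a => T (f a)) = fun a => T (hochDW N π f a) := by
  funext a
  have hochDW_eq : ∀ {r : ℕ} (g : BiCochain N p r), hochDW N π g a =
      (fun i => leftStarW N π (a 0) (g (fun r => a r.succ) i))
      + ∑ j : Fin p, ((-1 : ℤ) ^ (j : ℕ)) • g (fun r : Fin p =>
          if (r : ℕ) < (j : ℕ) then a r.castSucc
          else if (r : ℕ) = (j : ℕ) then moyalP N π (a r.castSucc) (a r.succ)
          else a r.succ)
      + ((-1 : ℤ) ^ (p + 1)) •
          fun i => rightStarW N π (g (fun r => a r.castSucc) i) (parityMap N (a (Fin.last p))) := by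
    intro r g
    funext i
    simp only [hochDW, Pi.add_apply, Finset.sum_apply, Pi.smul_apply]
  rw [hochDW_eq, hochDW_eq, map_add, map_add, map_sum, map_zsmul, hL, hR]
  simp only [map_zsmul]

/-- `dz^k ∧ ∂/∂z^k` on `q`-forms: `extDW` without its sign `(-1)^p`. -/
noncomputable def dzForm (q : ℕ) : OForm N q →+ OForm N (q + 1) where
  toFun ω i := ∑ k : Fin (q + 1), ((-1 : ℤ) ^ (k : ℕ)) •
    MvPowerSeries.pderiv ℂ (Sum.inr (i k)) (ω fun r => i (k.succAbove r))
  map_zero' := by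
    funext i
    simp
  map_add' ω η := by
    funext i
    simp [Finset.sum_add_distrib]

theorem extDW_eq {p q : ℕ} (f : BiCochain N p q) :
    extDW N f = ((-1 : ℤ) ^ p) • fun a => dzForm q (f a) := by
  funext a i
  simp only [extDW, dzForm, Pi.smul_apply, AddMonoidHom.coe_mk, ZeroHom.coe_mk,
    MvPowerSeries.pderiv_eq_mul_shift]
  rfl

theorem dzForm_leftStarW {q : ℕ} (a : MvPolynomial (Fin N) ℂ) (ω : OForm N q) :
    dzForm q (fun i => leftStarW N π a (ω i)) = fun i => leftStarW N π a (dzForm q ω i) := by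
  funext i
  simp only [dzForm, AddMonoidHom.coe_mk, ZeroHom.coe_mk, pderiv_leftStarW, leftStarW_sum,
    leftStarW_zsmul]

theorem dzForm_rightStarW {q : ℕ} (a : MvPolynomial (Fin N) ℂ) (ω : OForm N q) :
    dzForm q (fun i => rightStarW N π (ω i) a) = fun i => rightStarW N π (dzForm q ω i) a := by
  funext i
  simp only [dzForm, AddMonoidHom.coe_mk, ZeroHom.coe_mk, pderiv_rightStarW, rightStarW_sum,
    rightStarW_zsmul]

theorem hochDW_dzForm {p q : ℕ} (f : BiCochain N p q) :
    hochDW N π (fun a => dzForm q (f a)) = fun a => dzForm q (hochDW N π f a) :=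
  hochDW_comp_bimoduleHom π (dzForm q) (dzForm_leftStarW π) (dzForm_rightStarW π) f

theorem hochDW_zsmul {p q : ℕ} (c : ℤ) (f : BiCochain N p q) :
    hochDW N π (c • f) = c • hochDW N π f :=
  hochDW_comp_bimoduleHom π (DistribSMul.toAddMonoidHom (OForm N q) c)
    (fun a ω => funext fun i => (leftStarW_zsmul π a c (ω i)).symm)
    (fun a ω => funext fun i => (rightStarW_zsmul π a c (ω i)).symm) f

end Bicomplex

theorem extD_hochD_anticommute_general (n : ℕ)
    (π : Matrix (Fin (2 * n)) (Fin (2 * n)) ℂ)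
    (p q : ℕ) (f : BiCochain (2 * n) p q) :
    extDW (2 * n) (hochDW (2 * n) π f) + hochDW (2 * n) π (extDW (2 * n) f) = 0 := by
  rw [extDW_eq, extDW_eq, hochDW_zsmul, hochDW_dzForm, ← add_smul]
  have hsign : (-1 : ℤ) ^ (p + 1) + (-1) ^ p = 0 := by ring
  rw [hsign, zero_smul]

/-- on the Hochschild bicomplex `C^{p,q} = C^p(A_n, Ω̂^q)`, the
exterior differential `d f = (-1)^p dz^i ∧ ∂f/∂z^i` anticommutes with the
Hochschild differential `∂`: one has `d∂ + ∂d = 0`. -/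
theorem extD_hochD_anticommute (n : ℕ)
    (π : Matrix (Fin (2 * n)) (Fin (2 * n)) ℂ)
    (hanti : π.transpose = -π) (hnondeg : IsUnit π.det)
    (p q : ℕ) (f : BiCochain (2 * n) p q) :
    extDW (2 * n) (hochDW (2 * n) π f) + hochDW (2 * n) π (extDW (2 * n) f) = 0 :=
  extD_hochD_anticommute_general n π p q f
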